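/- A group that contains a nonabelian free subgroup is not amenable, and the amalgamated free product ℤ *_{nℤ = mℤ} ℤ (two copies of ℤ amalgamated over index-n and index-m subgroups) contains a nonabelian free subgroup whenever n ≥ 2 and m ≥ 3. -/

import Mathlib

/-!
A mean on `G` pulls back to a subgroup `H` by measuring `s ⊆ H` as `s · T` for a right transversal
`T`, and none exists on a free group with two distinct generators `a, b`: translating the words
that start with `a⁻¹` by `a` covers everything outside the words starting with `a`, so the four
disjoint sets of words starting with `a^{±1}, b^{±1}` would have total mean at least `2`.

In `P = ⟨a⟩ *_{a^n = b^m} ⟨b⟩` the elements `u = a b a b²` and `v = a b² a b` generate a free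
group. Spelling a reduced word in `u^{±1}, v^{±1}` block by block, cancellation only happens where
two blocks meet and involves at most the last two syllables of one block and the first two of the
next, so the result is an alternating word with exponents `±1` on `a` and `±1, ±2` on `b`. Since
`n ≥ 2` and `m ≥ 3`, no syllable lies in the amalgamated subgroup, and the normal form theorem for
amalgams shows that the word is not `1`.
-/

open Monoid

/-- A finitely additive left-invariant probability measure ("mean") on all subsets of `G`. -/
structure LeftInvariantMean (G : Type*) [Group G] where
  m : Set G → ℝ
  nonneg : ∀ s : Set G, 0 ≤ m s
  total : m Set.univ = 1
  addDisjoint : ∀ s t : Set G, Disjoint s t → m (s ∪ t) = m s + m t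
  leftInvariant : ∀ (g : G) (s : Set G), m ((g * ·) '' s) = m s

/-- A group is amenable if it admits a finitely additive left-invariant
probability measure on all of its subsets. -/
def Amenable (G : Type*) [Group G] : Prop := Nonempty (LeftInvariantMean G)

/-- The maps of the amalgam `ℤ *_ℤ ℤ`: the base copy of `ℤ` embeds as `nℤ` in the first
factor and as `mℤ` in the second factor. -/
def cyclicAmalgamMaps (n m : ℤ) : ∀ _ : Bool, (Multiplicative ℤ →* Multiplicative ℤ) :=
  fun i => if i then zpowGroupHom n else zpowGroupHom m

namespace LeftInvariantMean

variable {G : Type*} [Group G] (M : LeftInvariantMean G)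

theorem mono {s t : Set G} (h : s ⊆ t) : M.m s ≤ M.m t := by
  have := M.addDisjoint s (t \ s) Set.disjoint_sdiff_right
  rw [Set.union_sdiff_cancel h] at this
  linarith [M.nonneg (t \ s)]

theorem union_le (s t : Set G) : M.m (s ∪ t) ≤ M.m s + M.m t := by
  have := M.addDisjoint s (t \ s) Set.disjoint_sdiff_right
  rw [Set.union_sdiff_self] at this
  linarith [M.mono (Set.sdiff_subset : t \ s ⊆ t)]

theorem add_le_one_of_disjoint {s t : Set G} (h : Disjoint s t) : M.m s + M.m t ≤ 1 := by
  rw [← M.addDisjoint s t h, ← M.total]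
  exact M.mono (Set.subset_univ _)

theorem one_le_add_of_univ_subset {s t : Set G} (g : G) (h : Set.univ ⊆ s ∪ (g * ·) '' t) :
    1 ≤ M.m s + M.m t :=
  calc 1 = M.m Set.univ := M.total.symm
    _ ≤ M.m (s ∪ (g * ·) '' t) := M.mono h
    _ ≤ M.m s + M.m t := by simpa only [M.leftInvariant] using M.union_le s ((g * ·) '' t)

end LeftInvariantMean

namespace Subgroup.IsComplement

variable {G H : Type*} [Group G] [Group H] {f : H →* G} {T : Set G}

theorem image2_range_univ (hT : IsComplement (f.range : Set G) T) :
    Set.image2 (f · * ·) Set.univ T = Set.univ := by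
  refine Set.eq_univ_of_forall fun g => ?_
  obtain ⟨⟨⟨_, h, rfl⟩, t, ht⟩, hg⟩ := hT.2 g
  exact ⟨h, trivial, t, ht, hg⟩

theorem disjoint_image2_range (hT : IsComplement (f.range : Set G) T) (hf : Function.Injective f)
    {s t : Set H} (hst : Disjoint s t) :
    Disjoint (Set.image2 (f · * ·) s T) (Set.image2 (f · * ·) t T) := by
  rw [Set.disjoint_left]
  rintro _ ⟨h₁, h₁s, t₁, ht₁, rfl⟩ ⟨h₂, h₂t, t₂, ht₂, he⟩
  have := hT.1 (a₁ := (⟨f h₁, h₁, rfl⟩, ⟨t₁, ht₁⟩)) (a₂ := (⟨f h₂, h₂, rfl⟩, ⟨t₂, ht₂⟩)) he.symm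
  obtain rfl : h₁ = h₂ := hf (congrArg (fun x => x.1.1) this)
  exact Set.disjoint_left.mp hst h₁s h₂t

end Subgroup.IsComplement

noncomputable def LeftInvariantMean.comap {G H : Type*} [Group G] [Group H]
    (M : LeftInvariantMean G) (f : H →* G) (hf : Function.Injective f) : LeftInvariantMean H :=
  let T := (Subgroup.exists_isComplement_right f.range 1).choose
  have hT : Subgroup.IsComplement (f.range : Set G) T :=
    (Subgroup.exists_isComplement_right f.range 1).choose_spec.1
  { m := fun s => M.m (Set.image2 (f · * ·) s T)
    nonneg := fun _ => M.nonneg _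
    total := by simp only [hT.image2_range_univ, M.total]
    addDisjoint := fun s t hst => by
      simp only [Set.image2_union_left, M.addDisjoint _ _ (hT.disjoint_image2_range hf hst)]
    leftInvariant := fun h s => by
      conv_rhs => rw [← M.leftInvariant (f h), Set.image_image2]
      simp only [Set.image2_image_left, map_mul, mul_assoc] }

theorem Amenable.of_injective {G H : Type*} [Group G] [Group H] (f : H →* G)
    (hf : Function.Injective f) : Amenable G → Amenable H :=
  fun ⟨M⟩ => ⟨M.comap f hf⟩

theorem FreeGroup.univ_subset_startsWith_union {α : Type*} [DecidableEq α] (a : α) :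
    Set.univ ⊆ startsWith (a, true) ∪ (of a * ·) '' startsWith (a, false) := by
  intro g _
  by_cases hg : g ∈ startsWith (a, true)
  · exact Or.inl hg
  · exact Or.inr ⟨(of a)⁻¹ * g, startsWith_mk_mul (w := (a, false)) g hg, mul_inv_cancel_left _ _⟩

theorem FreeGroup.not_amenable {α : Type*} [Nontrivial α] : ¬ Amenable (FreeGroup α) := by
  classical
  rintro ⟨M⟩
  obtain ⟨a, b, hab⟩ := exists_pair_ne α
  have ha := M.one_le_add_of_univ_subset _ (univ_subset_startsWith_union a)
  have hb := M.one_le_add_of_univ_subset _ (univ_subset_startsWith_union b)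
  have hsep : Disjoint (startsWith (a, true) ∪ startsWith (a, false))
      (startsWith (b, true) ∪ startsWith (b, false)) := by
    simp [Set.disjoint_union_left, Set.disjoint_union_right, startsWith.disjoint_iff_ne, hab]
  have := M.add_le_one_of_disjoint hsep
  rw [M.addDisjoint _ _ (startsWith.disjoint_iff_ne.mpr (by simp)),
    M.addDisjoint _ _ (startsWith.disjoint_iff_ne.mpr (by simp))] at this
  linarith

namespace CyclicAmalgam

/-! A syllable `(i, k) : Bool × ℤ` stands for `a ^ k` if `i = true` and for `b ^ k` if
`i = false`. -/

-- Cancellation in `ℤ * ℤ`, ignoring the amalgamation: it only has to preserve products.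
def push (p : Bool × ℤ) : List (Bool × ℤ) → List (Bool × ℤ)
  | [] => [p]
  | q :: W =>
    if p.1 = q.1 then (if p.2 + q.2 = 0 then W else (p.1, p.2 + q.2) :: W) else p :: q :: W

def reduceWord (W : List (Bool × ℤ)) : List (Bool × ℤ) := W.foldr push []

def invWord (W : List (Bool × ℤ)) : List (Bool × ℤ) := (W.map fun p => (p.1, -p.2)).reverse

def IsSmallAlternating (W : List (Bool × ℤ)) : Prop :=
  W.IsChain (fun p q => p.1 ≠ q.1) ∧ ∀ p ∈ W, p.2 ≠ 0 ∧ p.2.natAbs < cond p.1 2 3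

instance : DecidablePred IsSmallAlternating := fun _ => inferInstanceAs (Decidable (_ ∧ _))

theorem IsSmallAlternating.append {U W : List (Bool × ℤ)} (hU : IsSmallAlternating U)
    (hW : IsSmallAlternating W) {b : Bool} (hUb : U.getLast?.map Prod.fst = some b)
    (hWb : W.head?.map Prod.fst = some !b) : IsSmallAlternating (U ++ W) := by
  refine ⟨List.isChain_append.mpr ⟨hU.1, hW.1, fun p hp q hq => ?_⟩,
    fun p hp => (List.mem_append.mp hp).elim (hU.2 p) (hW.2 p)⟩
  rw [Option.mem_def] at hp hq
  simp only [hp, hq, Option.map_some, Option.some_inj] at hUb hWb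
  simp [hUb, hWb]

def generatorWord : Bool → List (Bool × ℤ)
  | true => [(true, 1), (false, 1), (true, 1), (false, 2)]
  | false => [(true, 1), (false, 2), (true, 1), (false, 1)]

def block (ℓ : Bool × Bool) : List (Bool × ℤ) :=
  bif ℓ.2 then generatorWord ℓ.1 else invWord (generatorWord ℓ.1)

def blockHead (ℓ : Bool × Bool) : List (Bool × ℤ) := (block ℓ).take 2

def blockTail (ℓ : Bool × Bool) : List (Bool × ℤ) := (block ℓ).drop 2

def junction (ℓ ℓ' : Bool × Bool) : List (Bool × ℤ) := reduceWord (blockTail ℓ ++ blockHead ℓ')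

theorem blockHead_spec : ∀ ℓ : Bool × Bool,
    IsSmallAlternating (blockHead ℓ) ∧ (blockHead ℓ).getLast?.map Prod.fst = some !ℓ.2 := by
  decide

theorem blockTail_spec : ∀ ℓ : Bool × Bool,
    IsSmallAlternating (blockTail ℓ) ∧ (blockTail ℓ).head?.map Prod.fst = some ℓ.2 := by
  decide

theorem junction_spec : ∀ ℓ ℓ' : Bool × Bool, (ℓ.1 = ℓ'.1 → ℓ.2 = ℓ'.2) →
    IsSmallAlternating (junction ℓ ℓ') ∧ (junction ℓ ℓ').head?.map Prod.fst = some ℓ.2 ∧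
      (junction ℓ ℓ').getLast?.map Prod.fst = some !ℓ'.2 := by
  decide

def spell : Bool × Bool → List (Bool × Bool) → List (Bool × ℤ)
  | ℓ, [] => blockTail ℓ
  | ℓ, ℓ' :: L => junction ℓ ℓ' ++ spell ℓ' L

theorem spell_spec : ∀ (ℓ : Bool × Bool) (L : List (Bool × Bool)), FreeGroup.IsReduced (ℓ :: L) →
    IsSmallAlternating (spell ℓ L) ∧ (spell ℓ L).head?.map Prod.fst = some ℓ.2
  | ℓ, [], _ => blockTail_spec ℓ
  | ℓ, ℓ' :: L, h => by
    rw [FreeGroup.isReduced_cons_cons] at h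
    obtain ⟨hJ, hJhead, hJlast⟩ := junction_spec ℓ ℓ' h.1
    obtain ⟨hS, hShead⟩ := spell_spec ℓ' L h.2
    refine ⟨hJ.append hS hJlast (by simpa using hShead), ?_⟩
    obtain ⟨p, hp, -⟩ := Option.map_eq_some_iff.mp hJhead
    simpa [spell, List.head?_append, hp] using hJhead

variable (n m : ℤ)

def letter (p : Bool × ℤ) : PushoutI (cyclicAmalgamMaps n m) :=
  PushoutI.of (φ := cyclicAmalgamMaps n m) p.1 (Multiplicative.ofAdd p.2)

def wordProd (W : List (Bool × ℤ)) : PushoutI (cyclicAmalgamMaps n m) :=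
  (W.map (letter n m)).prod

def freeGen (x : Bool) : PushoutI (cyclicAmalgamMaps n m) := wordProd n m (generatorWord x)

variable {n m}

@[simp] theorem wordProd_nil : wordProd n m [] = 1 := rfl

@[simp] theorem wordProd_cons (p : Bool × ℤ) (W : List (Bool × ℤ)) :
    wordProd n m (p :: W) = letter n m p * wordProd n m W := List.prod_cons

@[simp] theorem wordProd_append (U W : List (Bool × ℤ)) :
    wordProd n m (U ++ W) = wordProd n m U * wordProd n m W := by
  simp [wordProd]

theorem letter_mul_letter (i : Bool) (a b : ℤ) :
    letter n m (i, a) * letter n m (i, b) = letter n m (i, a + b) := by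
  simp [letter, ← map_mul, ← ofAdd_add]

@[simp] theorem letter_zero (i : Bool) : letter n m (i, 0) = 1 := by
  simp [letter]

theorem letter_neg (i : Bool) (a : ℤ) : letter n m (i, -a) = (letter n m (i, a))⁻¹ := by
  simp [letter, ← map_inv]

theorem wordProd_push (p : Bool × ℤ) (W : List (Bool × ℤ)) :
    wordProd n m (push p W) = letter n m p * wordProd n m W := by
  match W with
  | [] => simp [push]
  | (j, b) :: W =>
    obtain ⟨i, a⟩ := p
    by_cases hij : i = j
    · subst hij
      by_cases hab : a + b = 0 <;> simp [push, hab, ← mul_assoc, letter_mul_letter]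
    · simp [push, hij]

theorem wordProd_reduceWord (W : List (Bool × ℤ)) :
    wordProd n m (reduceWord W) = wordProd n m W := by
  induction W with
  | nil => rfl
  | cons p W ih => rw [reduceWord, List.foldr_cons, wordProd_push, ← reduceWord, ih, wordProd_cons]

theorem wordProd_invWord (W : List (Bool × ℤ)) :
    wordProd n m (invWord W) = (wordProd n m W)⁻¹ := by
  simp [invWord, wordProd, List.prod_inv_reverse, Function.comp_def, letter_neg]

theorem wordProd_spell (ℓ : Bool × Bool) (L : List (Bool × Bool)) :
    wordProd n m (spell ℓ L) =
      wordProd n m (blockTail ℓ) * (L.map (wordProd n m ∘ block)).prod := by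
  induction L generalizing ℓ with
  | nil => simp [spell]
  | cons ℓ' L ih =>
    rw [spell, wordProd_append, ih, junction, wordProd_reduceWord, wordProd_append, List.map_cons,
      List.prod_cons, Function.comp_apply, ← List.take_append_drop 2 (block ℓ'), wordProd_append]
    simp only [blockHead, blockTail, mul_assoc]

theorem cond_freeGen (ℓ : Bool × Bool) :
    cond ℓ.2 (freeGen n m ℓ.1) (freeGen n m ℓ.1)⁻¹ = wordProd n m (block ℓ) := by
  obtain ⟨x, _ | _⟩ := ℓ
  · exact (wordProd_invWord _).symm
  · rfl

theorem lift_freeGen_mk (ℓ : Bool × Bool) (L : List (Bool × Bool)) :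
    FreeGroup.lift (freeGen n m) (FreeGroup.mk (ℓ :: L)) =
      wordProd n m (blockHead ℓ ++ spell ℓ L) := by
  rw [wordProd_append, wordProd_spell, ← mul_assoc, ← wordProd_append, blockHead, blockTail,
    List.take_append_drop, FreeGroup.lift_mk]
  simp only [cond_freeGen, List.map_cons, List.prod_cons, Function.comp_def]

theorem mem_range_cyclicAmalgamMaps {i : Bool} {x : Multiplicative ℤ} :
    x ∈ (cyclicAmalgamMaps n m i).range ↔ cond i n m ∣ x.toAdd := by
  have key (k : ℤ) : x ∈ (zpowGroupHom k : Multiplicative ℤ →* _).range ↔ k ∣ x.toAdd := by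
    constructor
    · rintro ⟨y, rfl⟩
      exact ⟨y.toAdd, by simp⟩
    · rintro ⟨c, hc⟩
      exact ⟨Multiplicative.ofAdd c, Multiplicative.toAdd.injective (by simp [hc])⟩
  cases i <;> exact key _

theorem cyclicAmalgamMaps_injective (hn : n ≠ 0) (hm : m ≠ 0) (i : Bool) :
    Function.Injective (cyclicAmalgamMaps n m i) := by
  have key (k : ℤ) (hk : k ≠ 0) : Function.Injective (zpowGroupHom k : Multiplicative ℤ →* _) :=
    fun x y hxy => by simpa [hk] using congrArg Multiplicative.toAdd hxy
  cases i
  · exact key m hm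
  · exact key n hn

theorem IsSmallAlternating.not_dvd (hn : 2 ≤ n) (hm : 3 ≤ m) {W : List (Bool × ℤ)}
    (hW : IsSmallAlternating W) : ∀ p ∈ W, ¬ cond p.1 n m ∣ p.2 := by
  rintro ⟨i, a⟩ hp hdvd
  obtain ⟨ha, hlt⟩ := hW.2 _ hp
  have := Int.natAbs_le_of_dvd_ne_zero hdvd ha
  cases i <;> simp only [cond_true, cond_false] at hlt this <;> omega

theorem IsSmallAlternating.wordProd_ne_one (hn : 2 ≤ n) (hm : 3 ≤ m) {W : List (Bool × ℤ)}
    (hW : IsSmallAlternating W) (hne : W ≠ []) : wordProd n m W ≠ 1 := by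
  have hdvd := hW.not_dvd hn hm
  let w : CoprodI.Word (fun _ : Bool => Multiplicative ℤ) :=
    { toList := W.map fun p => ⟨p.1, Multiplicative.ofAdd p.2⟩
      ne_one := by
        simp only [List.mem_map]
        rintro _ ⟨p, hp, rfl⟩ h
        exact hdvd p hp (by simp_all)
      chain_ne := (List.isChain_map _).mpr hW.1 }
  have hw : PushoutI.Reduced (cyclicAmalgamMaps n m) w := by
    intro g hg
    obtain ⟨p, hp, rfl⟩ := List.mem_map.mp hg
    exact mem_range_cyclicAmalgamMaps.not.mpr (hdvd p hp)
  have hprod : PushoutI.ofCoprodI w.prod = wordProd n m W := by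
    simp only [w, CoprodI.Word.prod, wordProd, List.map_map, map_list_prod, Function.comp_def,
      PushoutI.ofCoprodI_of]
    rfl
  intro h
  have := hw.eq_empty_of_mem_range (cyclicAmalgamMaps_injective (by omega) (by omega))
    (by rw [hprod, h]; exact one_mem _)
  exact hne (by simpa [w] using congrArg CoprodI.Word.toList this)

theorem injective_lift_freeGen (hn : 2 ≤ n) (hm : 3 ≤ m) :
    Function.Injective (FreeGroup.lift (freeGen n m)) := by
  refine (injective_iff_map_eq_one _).mpr fun g hg => by_contra fun hg1 => ?_
  obtain ⟨ℓ, L, hw⟩ := List.exists_cons_of_ne_nil (FreeGroup.toWord_eq_nil_iff.not.mpr hg1)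
  obtain ⟨hS, hShead⟩ := spell_spec ℓ L (hw ▸ FreeGroup.isReduced_toWord)
  obtain ⟨hH, hHlast⟩ := blockHead_spec ℓ
  refine (hH.append hS hHlast (by simpa using hShead)).wordProd_ne_one hn hm ?_ ?_
  · exact List.append_ne_nil_of_left_ne_nil (fun h => by simp [h] at hHlast) _
  · rw [← lift_freeGen_mk, ← hw, FreeGroup.mk_toWord, hg]

end CyclicAmalgam

theorem free_subgroup_not_amenable_and_cyclic_amalgam_contains_free.{u}
    (n m : ℤ) (hn : 2 ≤ n) (hm : 3 ≤ m) :
    (∀ (G : Type u) [Group G],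
      (∃ f : FreeGroup Bool →* G, Function.Injective f) → ¬ Amenable G) ∧
    ∃ f : FreeGroup Bool →* PushoutI (cyclicAmalgamMaps n m), Function.Injective f :=
  ⟨fun _ _ ⟨f, hf⟩ hG => FreeGroup.not_amenable (hG.of_injective f hf),
    ⟨_, CyclicAmalgam.injective_lift_freeGen hn hm⟩⟩
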